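/- Let {A_n} be a sequence of n×n symmetric matrices with nonnegative entries and zeros on the diagonal satisfying (BD) and (MF), fix (β, B) ∈ Θ, and let X be an observation from P_{n,β,B}. With b_i(x) := tanh(β m_i(x) + B), one has limsup_{n→∞} (1/n) E[ ( Σ_{i=1}^n (X_i − b_i(X)) m_i(X) )² ] < ∞, where E denotes expectation under P_{n,β,B}. -/

import Mathlib

open Filter

noncomputable section

/-- Spin configuration in `{-1,1}^n` encoded by a Boolean vector. -/
def spinVec (n : ℕ) (σ : Fin n → Bool) : Fin n → ℝ := fun i => if σ i then 1 else -1

/-- Local field `m_i(x) = ∑_j A i j * x j`. -/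
def mloc {n : ℕ} (A : Matrix (Fin n) (Fin n) ℝ) (x : Fin n → ℝ) (i : Fin n) : ℝ :=
  ∑ j, A i j * x j

/-- Average local field `m̄(x)`. -/
def mbar {n : ℕ} (A : Matrix (Fin n) (Fin n) ℝ) (x : Fin n → ℝ) : ℝ :=
  (1 / (n : ℝ)) * ∑ i, mloc A x i

/-- `T_n(x) = (1/n) ∑_i (m_i(x) - m̄(x))²`. -/
def Tstat {n : ℕ} (A : Matrix (Fin n) (Fin n) ℝ) (x : Fin n → ℝ) : ℝ :=
  (1 / (n : ℝ)) * ∑ i, (mloc A x i - mbar A x) ^ 2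

/-- Unnormalized Ising weight `exp((β/2) xᵀAx + B ∑ x_i)`. -/
def isingWt {n : ℕ} (A : Matrix (Fin n) (Fin n) ℝ) (β B : ℝ) (x : Fin n → ℝ) : ℝ :=
  Real.exp (β / 2 * ∑ i, ∑ j, A i j * x i * x j + B * ∑ i, x i)

/-- Probability of the event `E` under the Ising measure `P_{n,β,B}`. -/
def isingProb {n : ℕ} (A : Matrix (Fin n) (Fin n) ℝ) (β B : ℝ) (E : Set (Fin n → ℝ)) : ℝ :=
  (∑ σ : Fin n → Bool, E.indicator (isingWt A β B) (spinVec n σ)) /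
    (∑ σ : Fin n → Bool, isingWt A β B (spinVec n σ))

/-- Expectation of `f` under the Ising measure `P_{n,β,B}`. -/
def isingExp {n : ℕ} (A : Matrix (Fin n) (Fin n) ℝ) (β B : ℝ) (f : (Fin n → ℝ) → ℝ) : ℝ :=
  (∑ σ : Fin n → Bool, f (spinVec n σ) * isingWt A β B (spinVec n σ)) /
    (∑ σ : Fin n → Bool, isingWt A β B (spinVec n σ))

/-- Pseudo-likelihood equation `Q_n(β,B|x)`. -/
def Qfun {n : ℕ} (A : Matrix (Fin n) (Fin n) ℝ) (β B : ℝ) (x : Fin n → ℝ) : ℝ :=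
  ∑ i, mloc A x i * (x i - Real.tanh (β * mloc A x i + B))

/-- Pseudo-likelihood equation `R_n(β,B|x)`. -/
def Rfun {n : ℕ} (A : Matrix (Fin n) (Fin n) ℝ) (β B : ℝ) (x : Fin n → ℝ) : ℝ :=
  ∑ i, (x i - Real.tanh (β * mloc A x i + B))

/-- `b_i(x) = tanh(β m_i(x) + B)`. -/
def bvec {n : ℕ} (A : Matrix (Fin n) (Fin n) ℝ) (β B : ℝ) (x : Fin n → ℝ) : Fin n → ℝ :=
  fun i => Real.tanh (β * mloc A x i + B)

/-- `f_n(y) = (β/2) yᵀAy + B ∑ y_i`. -/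
def fN {n : ℕ} (A : Matrix (Fin n) (Fin n) ℝ) (β B : ℝ) (y : Fin n → ℝ) : ℝ :=
  β / 2 * ∑ i, ∑ j, A i j * y i * y j + B * ∑ i, y i

/-- Entropy term `I(y)` (with `0 log 0 = 0`, as `Real.log 0 = 0`). -/
def entI {n : ℕ} (y : Fin n → ℝ) : ℝ :=
  ∑ i, ((1 + y i) / 2 * Real.log ((1 + y i) / 2) + (1 - y i) / 2 * Real.log ((1 - y i) / 2))

/-!
Write `Q(x) = ∑ᵢ mᵢ(x) (xᵢ - bᵢ(x))`, so that `Q² = ∑ᵢ (xᵢ - bᵢ(x)) · mᵢ(x) Q(x)`. Since `bᵢ(x)` is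
the conditional mean of `Xᵢ` given the other spins, pairing each configuration with the one
flipped at site `i` gives `|E[(Xᵢ - bᵢ(X)) g(X)]| ≤ ½ sup |g(x) - g(x⁽ⁱ⁾)|`. Under (BD) the local
fields are bounded by `γ`, `mᵢ` does not change under the flip at `i`, and `Q` is
`(3γ + |β|γ²)`-Lipschitz for the `ℓ¹` distance on the cube; so each of the `n` terms is `O(1)`.
-/

open Finset Real

lemma Real.hasDerivAt_tanh (x : ℝ) : HasDerivAt tanh (1 - tanh x ^ 2) x := by
  have h := (hasDerivAt_sinh x).div (hasDerivAt_cosh x) (cosh_pos x).ne'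
  have hfun : (fun y => sinh y / cosh y) = tanh := funext fun y => (tanh_eq_sinh_div_cosh y).symm
  rw [show sinh / cosh = tanh from hfun] at h
  refine h.congr_deriv ?_
  rw [tanh_eq_sinh_div_cosh]
  field_simp

lemma Real.lipschitzWith_tanh : LipschitzWith 1 tanh := by
  refine lipschitzWith_of_nnnorm_deriv_le (fun x => (hasDerivAt_tanh x).differentiableAt) fun x => ?_
  rw [(hasDerivAt_tanh x).deriv, ← NNReal.coe_le_coe, coe_nnnorm, Real.norm_eq_abs, NNReal.coe_one,
    abs_le]
  constructor <;> nlinarith [tanh_sq_lt_one x, sq_nonneg (tanh x)]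

lemma Real.abs_tanh_sub_tanh_le (a b : ℝ) : |tanh a - tanh b| ≤ |a - b| := by
  simpa [Real.dist_eq] using lipschitzWith_tanh.dist_le_mul a b

lemma Real.tanh_mul_one_add_exp_neg_two_mul (s : ℝ) :
    tanh s * (1 + exp (-(2 * s))) = 1 - exp (-(2 * s)) := by
  have hs : exp (-(2 * s)) = exp (-s) * exp (-s) := by rw [← exp_add]; ring_nf
  have hinv : exp s * exp (-s) = 1 := by rw [← exp_add]; simp
  rw [tanh_eq, hs]
  field_simp
  linear_combination 2 * exp (-s) * hinv

lemma spin_sub_tanh_mul_one_add_exp {ε : ℝ} (hε : ε = 1 ∨ ε = -1) (t : ℝ) :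
    (ε - tanh t) * (1 + exp (-(2 * ε * t))) = 2 * ε * exp (-(2 * ε * t)) := by
  rcases hε with rfl | rfl
  · have := tanh_mul_one_add_exp_neg_two_mul t
    rw [mul_one]
    linear_combination -this
  · have := tanh_mul_one_add_exp_neg_two_mul (-t)
    rw [tanh_neg, show -(2 * -t) = -(2 * -1 * t) by ring] at this
    linear_combination this

/-- `tanh t` is the mean of a spin taking the value `ε` with weight `W` and `-ε` with weight
`e^{-2εt} W`: this is how `bᵢ` arises as a conditional mean under the Ising measure. -/
lemma spin_sub_tanh_mul_add_neg_spin_sub_tanh_mul {ε : ℝ} (hε : ε = 1 ∨ ε = -1) (t W : ℝ) :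
    (ε - tanh t) * W + (-ε - tanh t) * (exp (-(2 * ε * t)) * W) = 0 := by
  linear_combination W * spin_sub_tanh_mul_one_add_exp hε t

lemma abs_spin_sub_tanh_mul_le {ε : ℝ} (hε : ε = 1 ∨ ε = -1) (t : ℝ) {W : ℝ} (hW : 0 ≤ W) :
    |(ε - tanh t) * W| ≤ (W + exp (-(2 * ε * t)) * W) / 2 := by
  have key := congrArg abs (spin_sub_tanh_mul_one_add_exp hε t)
  have hε' : |ε| = 1 := by rcases hε with rfl | rfl <;> simp
  set r := exp (-(2 * ε * t)) with hr
  have hr0 : 0 < r := exp_pos _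
  rw [abs_mul, abs_mul, abs_mul, abs_two, hε', abs_of_pos (by positivity : 0 < 1 + r), abs_of_pos hr0]
    at key
  have h : |ε - tanh t| ≤ (1 + r) / 2 := by nlinarith [sq_nonneg (1 - r), abs_nonneg (ε - tanh t)]
  rw [abs_mul, abs_of_nonneg hW]
  nlinarith

theorem abs_sum_mul_mul_le_of_perm {α : Type*} [Fintype α] (τ : Equiv.Perm α) (a g W : α → ℝ)
    (M : ℝ) (hanti : ∀ σ, a σ * W σ + a (τ σ) * W (τ σ) = 0)
    (hbound : ∀ σ, |a σ * W σ| ≤ (W σ + W (τ σ)) / 2) (hg : ∀ σ, |g σ - g (τ σ)| ≤ M) :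
    |∑ σ, a σ * g σ * W σ| ≤ M / 2 * ∑ σ, W σ := by
  have hpair : 2 * ∑ σ, a σ * g σ * W σ = ∑ σ, a σ * W σ * (g σ - g (τ σ)) := by
    rw [two_mul]
    nth_rewrite 2 [← Equiv.sum_comp τ]
    rw [← sum_add_distrib]
    exact sum_congr rfl fun σ _ => by linear_combination g (τ σ) * hanti σ
  have hweights : ∑ σ, (W σ + W (τ σ)) / 2 * M = M * ∑ σ, W σ := by
    simp only [add_div, add_mul, sum_add_distrib, Equiv.sum_comp τ fun σ => W σ / 2 * M]
    rw [← sum_add_distrib, mul_sum]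
    exact sum_congr rfl fun _ _ => by ring
  have hsum : |∑ σ, a σ * W σ * (g σ - g (τ σ))| ≤ M * ∑ σ, W σ := by
    rw [← hweights]
    refine (abs_sum_le_sum_abs _ _).trans (sum_le_sum fun σ _ => ?_)
    rw [abs_mul]
    exact mul_le_mul (hbound σ) (hg σ) (abs_nonneg _) ((abs_nonneg _).trans (hbound σ))
  rw [← hpair, abs_mul, abs_two] at hsum
  linarith

section Configurations

variable {n : ℕ}

lemma spinVec_eq_one_or_neg_one (σ : Fin n → Bool) (j : Fin n) :
    spinVec n σ j = 1 ∨ spinVec n σ j = -1 := by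
  unfold spinVec; split_ifs <;> simp

lemma abs_spinVec (σ : Fin n → Bool) (j : Fin n) : |spinVec n σ j| = 1 := by
  rcases spinVec_eq_one_or_neg_one σ j with h | h <;> simp [h]

def flipAt (i : Fin n) : Equiv.Perm (Fin n → Bool) :=
  Function.Involutive.toPerm (fun σ => Function.update σ i (!σ i)) fun σ => by simp

lemma flipAt_apply (i : Fin n) (σ : Fin n → Bool) : flipAt i σ = Function.update σ i (!σ i) :=
  rfl

lemma spinVec_flipAt (i : Fin n) (σ : Fin n → Bool) :
    spinVec n (flipAt i σ) = Function.update (spinVec n σ) i (-spinVec n σ i) := by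
  funext j
  by_cases h : j = i
  · subst h; cases hσ : σ j <;> simp [flipAt_apply, spinVec, hσ]
  · simp [flipAt_apply, spinVec, h]

lemma update_eq_add_ite (x : Fin n → ℝ) (i : Fin n) (c : ℝ) (k : Fin n) :
    Function.update x i c k = x k + if k = i then c - x i else 0 := by
  by_cases h : k = i
  · subst h; simp
  · simp [h]

lemma mloc_update (A : Matrix (Fin n) (Fin n) ℝ) (x : Fin n → ℝ) (i j : Fin n) (c : ℝ) :
    mloc A (Function.update x i c) j = mloc A x j + A j i * (c - x i) := by
  simp only [mloc, update_eq_add_ite, mul_add, sum_add_distrib, mul_ite, mul_zero, sum_ite_eq',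
    mem_univ, if_true]

lemma fN_update {A : Matrix (Fin n) (Fin n) ℝ} (hA : A.IsSymm) (β B : ℝ) (x : Fin n → ℝ) (i : Fin n)
    (hi : A i i = 0) (c : ℝ) :
    fN A β B (Function.update x i c) = fN A β B x + (c - x i) * (β * mloc A x i + B) := by
  have hrow : ∑ k, A i k * (c - x i) * x k = (c - x i) * mloc A x i := by
    rw [mloc, mul_sum]; exact sum_congr rfl fun _ _ => by ring
  have hcol : ∑ j, A j i * x j * (c - x i) = (c - x i) * mloc A x i := by
    rw [mloc, mul_sum]; exact sum_congr rfl fun j _ => by rw [hA.apply]; ring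
  simp only [fN, update_eq_add_ite, mul_add, add_mul, sum_add_distrib, mul_ite, ite_mul, mul_zero,
    zero_mul, sum_ite_eq', sum_ite_irrel, sum_const_zero, mem_univ, if_true]
  rw [hrow, hcol, hi]
  ring

end Configurations

section Ising

variable {n : ℕ} {A : Matrix (Fin n) (Fin n) ℝ}

lemma isingWt_update (hA : A.IsSymm) (β B : ℝ) (x : Fin n → ℝ) (i : Fin n) (hi : A i i = 0)
    (c : ℝ) : isingWt A β B (Function.update x i c) =
      exp ((c - x i) * (β * mloc A x i + B)) * isingWt A β B x := by
  change exp (fN A β B _) = _ * exp (fN A β B x)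
  rw [fN_update hA β B x i hi, exp_add, mul_comm]

lemma bvec_update_self (β B : ℝ) (x : Fin n → ℝ) (i : Fin n) (hi : A i i = 0) (c : ℝ) :
    bvec A β B (Function.update x i c) i = bvec A β B x i := by
  simp only [bvec, mloc_update, hi, zero_mul, add_zero]

lemma isingWt_flipAt (hA : A.IsSymm) (hdiag : ∀ i, A i i = 0) {β B : ℝ} {i : Fin n}
    (σ : Fin n → Bool) : isingWt A β B (spinVec n (flipAt i σ)) =
      exp (-(2 * spinVec n σ i * (β * mloc A (spinVec n σ) i + B))) *
        isingWt A β B (spinVec n σ) := by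
  rw [spinVec_flipAt, isingWt_update hA β B _ i (hdiag i)]
  ring_nf

lemma spinVec_flipAt_sub_bvec (hdiag : ∀ i, A i i = 0) {β B : ℝ} {i : Fin n}
    (σ : Fin n → Bool) : spinVec n (flipAt i σ) i - bvec A β B (spinVec n (flipAt i σ)) i =
      -spinVec n σ i - bvec A β B (spinVec n σ) i := by
  rw [spinVec_flipAt, Function.update_self, bvec_update_self β B _ i (hdiag i)]

theorem abs_isingExp_spin_sub_bvec_mul_le (hA : A.IsSymm) (hdiag : ∀ i, A i i = 0) (β B : ℝ)
    (i : Fin n) (g : (Fin n → ℝ) → ℝ) (M : ℝ)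
    (hg : ∀ σ, |g (spinVec n σ) - g (Function.update (spinVec n σ) i (-spinVec n σ i))| ≤ M) :
    |isingExp A β B (fun x => (x i - bvec A β B x i) * g x)| ≤ M / 2 := by
  have hZ : 0 < ∑ σ : Fin n → Bool, isingWt A β B (spinVec n σ) :=
    sum_pos (fun σ _ => exp_pos _) univ_nonempty
  rw [isingExp, abs_div, abs_of_pos hZ, div_le_iff₀ hZ]
  refine abs_sum_mul_mul_le_of_perm (flipAt i)
    (fun σ => spinVec n σ i - bvec A β B (spinVec n σ) i) (fun σ => g (spinVec n σ))
    (fun σ => isingWt A β B (spinVec n σ)) M (fun σ => ?_) (fun σ => ?_)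
    (fun σ => by simpa only [spinVec_flipAt] using hg σ) <;>
  simp only [isingWt_flipAt hA hdiag, spinVec_flipAt_sub_bvec hdiag]
  · exact spin_sub_tanh_mul_add_neg_spin_sub_tanh_mul (spinVec_eq_one_or_neg_one σ i) _ _
  · exact abs_spin_sub_tanh_mul_le (spinVec_eq_one_or_neg_one σ i) _ (exp_pos _).le

end Ising

section LocalField

variable {n : ℕ} {A : Matrix (Fin n) (Fin n) ℝ}

lemma abs_mloc_le (hnn : ∀ j k, 0 ≤ A j k) {x : Fin n → ℝ} (hx : ∀ k, |x k| ≤ 1) (j : Fin n) :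
    |mloc A x j| ≤ ∑ k, A j k := by
  refine (abs_sum_le_sum_abs _ _).trans (sum_le_sum fun k _ => ?_)
  rw [abs_mul, abs_of_nonneg (hnn j k)]
  exact mul_le_of_le_one_right (hnn j k) (hx k)

lemma sum_abs_mloc_sub_mloc_le (hnn : ∀ j k, 0 ≤ A j k) {γ : ℝ} (hcol : ∀ k, ∑ j, A j k ≤ γ)
    (x y : Fin n → ℝ) : ∑ j, |mloc A x j - mloc A y j| ≤ γ * ∑ k, |x k - y k| := by
  calc ∑ j, |mloc A x j - mloc A y j| = ∑ j, |∑ k, A j k * (x k - y k)| := by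
        simp only [mloc, ← sum_sub_distrib, mul_sub]
    _ ≤ ∑ j, ∑ k, A j k * |x k - y k| := sum_le_sum fun j _ =>
        (abs_sum_le_sum_abs _ _).trans_eq
          (sum_congr rfl fun k _ => by rw [abs_mul, abs_of_nonneg (hnn j k)])
    _ = ∑ k, (∑ j, A j k) * |x k - y k| := by rw [sum_comm]; simp only [sum_mul]
    _ ≤ ∑ k, γ * |x k - y k| :=
        sum_le_sum fun k _ => mul_le_mul_of_nonneg_right (hcol k) (abs_nonneg _)
    _ = γ * ∑ k, |x k - y k| := (mul_sum _ _ _).symm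

lemma abs_mul_sub_tanh_sub_mul_sub_tanh_le {β B γ u v a c : ℝ} (hu : |u| ≤ γ) (hc : |c| ≤ 1) :
    |u * (a - tanh (β * u + B)) - v * (c - tanh (β * v + B))| ≤
      γ * |a - c| + (|β| * γ + 2) * |u - v| := by
  have htanh : |tanh (β * v + B) - tanh (β * u + B)| ≤ |β| * |u - v| := by
    refine (abs_tanh_sub_tanh_le _ _).trans_eq ?_
    rw [← abs_mul, abs_sub_comm]
    congr 1
    ring
  have hcv : |c - tanh (β * v + B)| ≤ 2 :=
    (abs_sub _ _).trans (by linarith [abs_tanh_lt_one (β * v + B)])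
  calc _ = |u * (a - c) + u * (tanh (β * v + B) - tanh (β * u + B)) +
          (u - v) * (c - tanh (β * v + B))| := by ring_nf
    _ ≤ |u| * |a - c| + |u| * (|β| * |u - v|) + |u - v| * 2 := by
        refine (abs_add_three _ _ _).trans ?_
        rw [abs_mul, abs_mul, abs_mul]
        gcongr
    _ ≤ γ * |a - c| + γ * (|β| * |u - v|) + |u - v| * 2 := by gcongr
    _ = _ := by ring

theorem abs_Qfun_sub_Qfun_le (hnn : ∀ j k, 0 ≤ A j k) {γ : ℝ} (hγ : 0 ≤ γ)
    (hrow : ∀ j, ∑ k, A j k ≤ γ) (hcol : ∀ k, ∑ j, A j k ≤ γ) (β B : ℝ) {x y : Fin n → ℝ}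
    (hx : ∀ k, |x k| ≤ 1) (hy : ∀ k, |y k| ≤ 1) :
    |Qfun A β B x - Qfun A β B y| ≤ (3 * γ + |β| * γ ^ 2) * ∑ k, |x k - y k| := by
  calc |Qfun A β B x - Qfun A β B y|
      ≤ ∑ j, |mloc A x j * (x j - tanh (β * mloc A x j + B)) -
          mloc A y j * (y j - tanh (β * mloc A y j + B))| := by
        rw [Qfun, Qfun, ← sum_sub_distrib]
        exact abs_sum_le_sum_abs _ _
    _ ≤ ∑ j, (γ * |x j - y j| + (|β| * γ + 2) * |mloc A x j - mloc A y j|) :=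
        sum_le_sum fun j _ =>
          abs_mul_sub_tanh_sub_mul_sub_tanh_le ((abs_mloc_le hnn hx j).trans (hrow j)) (hy j)
    _ = γ * ∑ k, |x k - y k| + (|β| * γ + 2) * ∑ j, |mloc A x j - mloc A y j| := by
        rw [sum_add_distrib, ← mul_sum, ← mul_sum]
    _ ≤ γ * ∑ k, |x k - y k| + (|β| * γ + 2) * (γ * ∑ k, |x k - y k|) := by
        gcongr
        exact sum_abs_mloc_sub_mloc_le hnn hcol x y
    _ = _ := by ring

lemma sum_abs_sub_update (x : Fin n → ℝ) (i : Fin n) (c : ℝ) :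
    ∑ k, |x k - Function.update x i c k| = |x i - c| := by
  simp only [update_eq_add_ite, sub_add_cancel_left, abs_neg, abs_ite, abs_zero, sum_ite_eq',
    mem_univ, if_true, abs_sub_comm]

end LocalField

section Bound

variable {n : ℕ} {A : Matrix (Fin n) (Fin n) ℝ}

lemma isingExp_sum {ι : Type*} (s : Finset ι) (β B : ℝ) (f : ι → (Fin n → ℝ) → ℝ) :
    isingExp A β B (fun x => ∑ i ∈ s, f i x) = ∑ i ∈ s, isingExp A β B (f i) := by
  simp only [isingExp, sum_mul, ← sum_div]
  rw [sum_comm]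

theorem abs_mloc_mul_Qfun_sub_update_le (hA : A.IsSymm) (hnn : ∀ j k, 0 ≤ A j k)
    (hdiag : ∀ i, A i i = 0) {γ : ℝ} (hγ : 0 ≤ γ) (hrow : ∀ j, ∑ k, A j k ≤ γ) (β B : ℝ)
    {x : Fin n → ℝ} (hx : ∀ k, |x k| ≤ 1) (i : Fin n) :
    |mloc A x i * Qfun A β B x -
        mloc A (Function.update x i (-x i)) i * Qfun A β B (Function.update x i (-x i))| ≤
      2 * (γ * (3 * γ + |β| * γ ^ 2)) := by
  have hx' : ∀ k, |Function.update x i (-x i) k| ≤ 1 := fun k => by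
    rw [Function.update_apply]
    split_ifs with h
    · rw [abs_neg, ← h]; exact hx k
    · exact hx k
  have hcol : ∀ k, ∑ j, A j k ≤ γ := fun k => by simpa only [hA.apply] using hrow k
  have hdist : ∑ k, |x k - Function.update x i (-x i) k| ≤ 2 := by
    rw [sum_abs_sub_update, sub_neg_eq_add, ← two_mul, abs_mul, abs_two]
    linarith [hx i]
  rw [mloc_update, hdiag i, zero_mul, add_zero, ← mul_sub, abs_mul]
  calc _ ≤ γ * ((3 * γ + |β| * γ ^ 2) * 2) := by
        gcongr
        · exact (abs_mloc_le hnn hx i).trans (hrow i)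
        · exact (abs_Qfun_sub_Qfun_le hnn hγ hrow hcol β B hx hx').trans (by gcongr)
    _ = _ := by ring

theorem isingExp_Qfun_sq_le (hA : A.IsSymm) (hnn : ∀ j k, 0 ≤ A j k) (hdiag : ∀ i, A i i = 0)
    {γ : ℝ} (hγ : 0 ≤ γ) (hrow : ∀ j, ∑ k, A j k ≤ γ) (β B : ℝ) :
    isingExp A β B (fun x => Qfun A β B x ^ 2) ≤ n * (γ * (3 * γ + |β| * γ ^ 2)) := by
  have hsq : (fun x => Qfun A β B x ^ 2) =
      fun x => ∑ i, (x i - bvec A β B x i) * (mloc A x i * Qfun A β B x) := by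
    funext x
    rw [sq]
    nth_rewrite 1 [Qfun]
    rw [sum_mul]
    exact sum_congr rfl fun i _ => by rw [bvec]; ring
  rw [hsq, isingExp_sum]
  calc _ ≤ ∑ _i : Fin n, γ * (3 * γ + |β| * γ ^ 2) := sum_le_sum fun i _ => by
        refine (le_abs_self _).trans ?_
        have := abs_isingExp_spin_sub_bvec_mul_le hA hdiag β B i
          (fun x => mloc A x i * Qfun A β B x) _
          fun σ => abs_mloc_mul_Qfun_sub_update_le hA hnn hdiag hγ hrow β B
            (fun k => (abs_spinVec σ k).le) i
        linarith
    _ = _ := by simp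

end Bound

theorem stmt12_general (A : (n : ℕ) → Matrix (Fin n) (Fin n) ℝ)
    (hsymm : ∀ n, (A n).IsSymm)
    (hnonneg : ∀ n, ∀ i j : Fin n, 0 ≤ A n i j)
    (hdiag : ∀ n, ∀ i : Fin n, A n i i = 0)
    (hBD : ∃ γ : ℝ, ∀ n, ∀ i : Fin n, (∑ j, A n i j) ≤ γ)
    (β B : ℝ) :
    IsBoundedUnder (· ≤ ·) atTop (fun n : ℕ => (1 / (n : ℝ)) * isingExp (A n) β B
      (fun x => (∑ i, (x i - bvec (A n) β B x i) * mloc (A n) x i) ^ 2)) := by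
  obtain ⟨γ, hγ⟩ := hBD
  set γ₀ := max γ 0
  refine isBoundedUnder_of ⟨γ₀ * (3 * γ₀ + |β| * γ₀ ^ 2), fun n => ?_⟩
  have hQ : (fun x => (∑ i, (x i - bvec (A n) β B x i) * mloc (A n) x i) ^ 2) =
      fun x => Qfun (A n) β B x ^ 2 :=
    funext fun x => by rw [Qfun]; exact congrArg (· ^ 2) (sum_congr rfl fun i _ => mul_comm _ _)
  have hbound := isingExp_Qfun_sq_le (hsymm n) (hnonneg n) (hdiag n) (le_max_right γ 0)
    (fun i => (hγ n i).trans (le_max_left γ 0)) β B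
  rw [hQ]
  rcases n.eq_zero_or_pos with rfl | hn
  · simp only [Nat.cast_zero, div_zero, zero_mul]
    positivity
  · calc _ ≤ 1 / (n : ℝ) * (n * (γ₀ * (3 * γ₀ + |β| * γ₀ ^ 2))) := by gcongr
      _ = _ := by field_simp

/-- `limsup (1/n) E[(∑ᵢ (Xᵢ - bᵢ(X)) mᵢ(X))²] < ∞`. -/
theorem stmt12 (A : (n : ℕ) → Matrix (Fin n) (Fin n) ℝ)
    (hsymm : ∀ n, (A n).IsSymm)
    (hnonneg : ∀ n, ∀ i j : Fin n, 0 ≤ A n i j)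
    (hdiag : ∀ n, ∀ i : Fin n, A n i i = 0)
    (hBD : ∃ γ : ℝ, ∀ n, ∀ i : Fin n, (∑ j, A n i j) ≤ γ)
    (hMF : Tendsto (fun n : ℕ => (1 / (n : ℝ)) * ∑ i, ∑ j, (A n i j) ^ 2) atTop (nhds 0))
    (β B : ℝ) (hβ : 0 < β) (hB : B ≠ 0) :
    IsBoundedUnder (· ≤ ·) atTop (fun n : ℕ => (1 / (n : ℝ)) * isingExp (A n) β B
      (fun x => (∑ i, (x i - bvec (A n) β B x i) * mloc (A n) x i) ^ 2)) :=
  stmt12_general A hsymm hnonneg hdiag hBD β B
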